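/- arXiv:math/0609303 — 4 statements merged into one kernel-verified Lean document; each statement's English description precedes it below -/
import Mathlib

section
/- Let an Eulerian graph with m edges be given. Then the spectral gap of the simple random walk on it satisfies λ ≥ 1 − cos(2π/m); that is, for every function f : V → ℝ, ∑_{x,y∈V} (f(x) − f(y))² π(x) P(x,y) ≥ (1 − cos(2π/m)) · ∑_{x,y∈V} (f(x) − f(y))² π(x) π(y). -/
open scoped Classical

noncomputable section

namespace Stmt0

variable {V : Type*} [Fintype V]

/-- out-degree of a vertex: number of edges leaving `x` (with multiplicity). -/
def edeg (E : V → V → ℕ) (x : V) : ℕ := ∑ y, E x y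

/-- total number of (directed) edges. -/
def numEdges (E : V → V → ℕ) : ℕ := ∑ x, ∑ y, E x y

/-- simple random walk transition kernel `P(x,y) = E(x,y)/deg(x)`. -/
def srw (E : V → V → ℕ) (x y : V) : ℝ := (E x y : ℝ) / (edeg E x : ℝ)

/-- stationary distribution `π(x) = deg(x)/m`. -/
def statPi (E : V → V → ℕ) (x : V) : ℝ := (edeg E x : ℝ) / (numEdges E : ℝ)

/-!
An Eulerian circuit `u : ZMod m → V` traverses every edge `(x, y)` exactly `E x y` times and
visits every vertex `x` exactly `deg x` times. Hence, for `g = f ∘ u`, the Dirichlet form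
`∑ (f x - f y)² π(x) P(x,y)` equals `m⁻¹ ∑ᵢ (g (i+1) - g i)²` and the variance form
`∑ (f x - f y)² π(x) π(y)` equals `m⁻² ∑ᵢ ∑ⱼ (g i - g j)²`, so the claim is the Poincaré
inequality of the cycle `ZMod m`. The discrete Fourier transform diagonalises both sides of the
latter, and the nonzero frequency `k` carries the weight `1 - cos (2πk/m) ≥ 1 - cos (2π/m)`.

The circuit is a longest trail: in a balanced graph a trail that is not closed can be extended,
and by strong connectivity a closed trail that misses an edge passes through a vertex with an
unused outgoing edge, so it can be rotated to start there and extended by that edge.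
-/

open Finset Function

section Walks

variable {α : Type*}

/-- A walk of length `n` is a sequence `w : ℕ → α`, of which only `w 0, …, w n` matter. -/
def pathEdgeCount (w : ℕ → α) (n : ℕ) (a b : α) : ℕ :=
  #{i ∈ range n | w i = a ∧ w (i + 1) = b}

lemma pathEdgeCount_congr {w w' : ℕ → α} {n : ℕ} (h : ∀ i ≤ n, w i = w' i) (a b : α) :
    pathEdgeCount w n a b = pathEdgeCount w' n a b := by
  refine congrArg card (filter_congr fun i hi => ?_)
  rw [mem_range] at hi
  rw [h i hi.le, h (i + 1) hi]

lemma pathEdgeCount_update_succ (w : ℕ → α) (n : ℕ) (y a b : α) :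
    pathEdgeCount (update w (n + 1) y) (n + 1) a b =
      pathEdgeCount w n a b + if w n = a ∧ y = b then 1 else 0 := by
  simp only [pathEdgeCount, card_filter, sum_range_succ, update_self,
    update_of_ne (Nat.ne_add_one n)]
  congr 1
  refine sum_congr rfl fun i hi => ?_
  rw [mem_range] at hi
  rw [update_of_ne (by omega), update_of_ne (by omega)]

lemma card_departures_add_ite_eq (w : ℕ → α) (n : ℕ) (c : α) :
    #{i ∈ range n | w i = c} + (if w n = c then 1 else 0) =
      #{i ∈ range n | w (i + 1) = c} + if w 0 = c then 1 else 0 := by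
  simp only [card_filter]
  rw [← sum_range_succ, sum_range_succ']

variable [Fintype α]

lemma sum_pathEdgeCount_right (w : ℕ → α) (n : ℕ) (a : α) :
    ∑ b, pathEdgeCount w n a b = #{i ∈ range n | w i = a} := by
  rw [card_eq_sum_card_fiberwise (f := fun i => w (i + 1)) (t := univ) (by simp)]
  simp only [pathEdgeCount, filter_filter]

lemma sum_pathEdgeCount_left (w : ℕ → α) (n : ℕ) (b : α) :
    ∑ a, pathEdgeCount w n a b = #{i ∈ range n | w (i + 1) = b} := by
  rw [card_eq_sum_card_fiberwise (f := w) (t := univ) (by simp)]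
  simp only [pathEdgeCount, filter_filter, and_comm]

lemma sum_sum_pathEdgeCount (w : ℕ → α) (n : ℕ) :
    ∑ a, ∑ b, pathEdgeCount w n a b = n := by
  simp_rw [sum_pathEdgeCount_right]
  rw [← card_eq_sum_card_fiberwise (f := w) (t := univ) (by simp), card_range]

end Walks

section ClosedWalks

variable {α : Type*} {n : ℕ} [NeZero n]

/-- A closed walk of length `n` is a map `ZMod n → α`. -/
def cycleEdgeCount (u : ZMod n → α) (a b : α) : ℕ :=
  #{i | u i = a ∧ u (i + 1) = b}

lemma cycleEdgeCount_comp_add_right (u : ZMod n → α) (j : ZMod n) (a b : α) :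
    cycleEdgeCount (fun i => u (i + j)) a b = cycleEdgeCount u a b :=
  card_equiv (Equiv.addRight j) fun i => by simp [add_right_comm]

lemma pathEdgeCount_natCast (u : ZMod n → α) (a b : α) :
    pathEdgeCount (fun i : ℕ => u i) n a b = cycleEdgeCount u a b := by
  refine card_nbij' (fun i => (i : ZMod n)) ZMod.val ?_ ?_ ?_ ?_ <;> intro i hi <;>
    simp_all [ZMod.val_lt, ZMod.val_natCast, Nat.mod_eq_of_lt]

lemma sum_comp_cycle [Fintype α] {R : Type*} [AddCommMonoid R] (u : ZMod n → α)
    (F : α → α → R) :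
    ∑ i, F (u i) (u (i + 1)) = ∑ a, ∑ b, cycleEdgeCount u a b • F a b := by
  rw [← Fintype.sum_prod_type' (f := fun a b => cycleEdgeCount u a b • F a b),
    ← sum_fiberwise' univ (fun i => (u i, u (i + 1))) (fun p => F p.1 p.2)]
  refine sum_congr rfl fun p _ => ?_
  rw [sum_const, cycleEdgeCount]
  simp [Prod.ext_iff]

end ClosedWalks

section Eulerian

variable {E : V → V → ℕ}

lemma edeg_le_numEdges (E : V → V → ℕ) (x : V) : edeg E x ≤ numEdges E :=
  single_le_sum (f := edeg E) (fun _ _ => Nat.zero_le _) (mem_univ x)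

def IsTrail (E : V → V → ℕ) (w : ℕ → V) (n : ℕ) : Prop :=
  ∀ a b, pathEdgeCount w n a b ≤ E a b

lemma IsTrail.le_numEdges {w : ℕ → V} {n : ℕ} (hw : IsTrail E w n) : n ≤ numEdges E := by
  rw [← sum_sum_pathEdgeCount w n]
  exact sum_le_sum fun a _ => sum_le_sum fun b _ => hw a b

lemma IsTrail.exists_update_succ (hbal : ∀ x, edeg E x = ∑ y, E y x) {w : ℕ → V} {n : ℕ}
    (hw : IsTrail E w n) (hopen : w n ≠ w 0) : ∃ y, IsTrail E (update w (n + 1) y) (n + 1) := by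
  have hvisits := card_departures_add_ite_eq w n (w n)
  rw [if_pos rfl, if_neg hopen.symm] at hvisits
  have hout : ∑ b, pathEdgeCount w n (w n) b < ∑ b, E (w n) b :=
    calc ∑ b, pathEdgeCount w n (w n) b
        < ∑ a, pathEdgeCount w n a (w n) := by
          rw [sum_pathEdgeCount_right, sum_pathEdgeCount_left]; omega
      _ ≤ ∑ a, E a (w n) := sum_le_sum fun a _ => hw a (w n)
      _ = ∑ b, E (w n) b := (hbal (w n)).symm
  obtain ⟨y, -, hy⟩ := exists_lt_of_sum_lt hout
  refine ⟨y, fun a b => ?_⟩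
  rw [pathEdgeCount_update_succ]
  split_ifs with hab
  · obtain ⟨rfl, rfl⟩ := hab
    omega
  · simpa using hw a b

lemma exists_longest_trail [NeZero (numEdges E)] :
    ∃ n w, IsTrail E w n ∧ 1 ≤ n ∧ ∀ k w', IsTrail E w' k → k ≤ n := by
  obtain ⟨a, b, hab⟩ : ∃ a b, 0 < E a b := by
    by_contra! h
    exact NeZero.ne (numEdges E) (sum_eq_zero fun a _ => sum_eq_zero fun b _ => by
      simpa using h a b)
  have hedge : IsTrail E (update (fun _ => a) 1 b) 1 := by
    intro x y
    rw [pathEdgeCount_update_succ, pathEdgeCount, range_zero, filter_empty, card_empty, zero_add]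
    split_ifs with h
    · rwa [← h.1, ← h.2]
    · exact Nat.zero_le _
  let P : ℕ → Prop := fun k => ∃ w, IsTrail E w k
  have h1 : 1 ≤ numEdges E := hedge.le_numEdges
  obtain ⟨w, hw⟩ : P (Nat.findGreatest P (numEdges E)) := Nat.findGreatest_spec h1 ⟨_, hedge⟩
  refine ⟨_, w, hw, Nat.le_findGreatest h1 ⟨_, hedge⟩, fun k w' hw' => ?_⟩
  by_contra! hk
  exact Nat.findGreatest_is_greatest hk hw'.le_numEdges ⟨w', hw'⟩

def IsEulerCircuit (E : V → V → ℕ) {n : ℕ} [NeZero n] (u : ZMod n → V) : Prop :=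
  ∀ a b, cycleEdgeCount u a b = E a b

lemma exists_lt_of_not_isEulerCircuit {n : ℕ} [NeZero n]
    (hconn : ∀ x y : V, Relation.ReflTransGen (fun a b => 0 < E a b) x y) {u : ZMod n → V}
    (hu : ∀ a b, cycleEdgeCount u a b ≤ E a b) (hne : ¬IsEulerCircuit E u) :
    ∃ i q, cycleEdgeCount u (u i) q < E (u i) q := by
  by_contra! hsat
  have hstep : ∀ p q, 0 < E p q → p ∈ Set.range u → q ∈ Set.range u := by
    rintro p q hpq ⟨i, rfl⟩
    obtain ⟨j, hj⟩ := card_pos.mp (hpq.trans_le (hsat i q))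
    exact ⟨j + 1, (mem_filter.mp hj).2.2⟩
  have hreach : ∀ y, Relation.ReflTransGen (fun a b => 0 < E a b) (u 0) y → y ∈ Set.range u := by
    intro y hy
    induction hy with
    | refl => exact ⟨0, rfl⟩
    | tail _ hpq ih => exact hstep _ _ hpq ih
  refine hne fun a b => ?_
  obtain ⟨i, rfl⟩ := hreach a (hconn (u 0) a)
  exact le_antisymm (hu _ b) (hsat i b)

theorem exists_isEulerCircuit [NeZero (numEdges E)] (hbal : ∀ x, edeg E x = ∑ y, E y x)
    (hconn : ∀ x y : V, Relation.ReflTransGen (fun a b => 0 < E a b) x y) :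
    ∃ u : ZMod (numEdges E) → V, IsEulerCircuit E u := by
  obtain ⟨n, w, hw, hn, hmax⟩ := exists_longest_trail (E := E)
  have hclosed : w n = w 0 := by
    by_contra hopen
    obtain ⟨y, hy⟩ := hw.exists_update_succ hbal hopen
    exact absurd (hmax _ _ hy) (by omega)
  have : NeZero n := ⟨by omega⟩
  set u : ZMod n → V := fun i => w i.val
  have hcount : ∀ a b, cycleEdgeCount u a b = pathEdgeCount w n a b := fun a b => by
    rw [← pathEdgeCount_natCast]
    refine pathEdgeCount_congr (fun i hi => ?_) a b
    rcases hi.lt_or_eq with hi | rfl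
    · simp [u, ZMod.val_natCast, Nat.mod_eq_of_lt hi]
    · simp [u, hclosed]
  have hu : ∀ a b, cycleEdgeCount u a b ≤ E a b := fun a b => hcount a b ▸ hw a b
  have hcircuit : IsEulerCircuit E u := by
    by_contra hne
    obtain ⟨i, q, hq⟩ := exists_lt_of_not_isEulerCircuit hconn hu hne
    -- the closed trail rotated to start at `u i`, followed by the unused edge `(u i, q)`
    have hlonger : IsTrail E (update (fun k : ℕ => u (k + i)) (n + 1) q) (n + 1) := by
      intro a b
      rw [pathEdgeCount_update_succ, pathEdgeCount_natCast (fun k => u (k + i)),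
        cycleEdgeCount_comp_add_right, ZMod.natCast_self, zero_add]
      split_ifs with hab
      · obtain ⟨rfl, rfl⟩ := hab
        omega
      · simpa using hu a b
    exact absurd (hmax _ _ hlonger) (by omega)
  obtain rfl : n = numEdges E := by
    rw [← sum_sum_pathEdgeCount w n, numEdges]
    exact sum_congr rfl fun a _ => sum_congr rfl fun b _ => (hcount a b).symm.trans (hcircuit a b)
  exact ⟨u, hcircuit⟩

lemma IsEulerCircuit.sum_comp_add_one {n : ℕ} [NeZero n] {u : ZMod n → V}
    (hu : IsEulerCircuit E u) (F : V → V → ℝ) :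
    ∑ i, F (u i) (u (i + 1)) = ∑ a, ∑ b, E a b * F a b := by
  simp_rw [sum_comp_cycle, hu _ _, nsmul_eq_mul]

lemma IsEulerCircuit.sum_comp {n : ℕ} [NeZero n] {u : ZMod n → V} (hu : IsEulerCircuit E u)
    (h : V → ℝ) :
    ∑ i, h (u i) = ∑ a, edeg E a * h a := by
  rw [hu.sum_comp_add_one fun a _ => h a]
  simp [edeg, sum_mul]

lemma sum_sq_mul_statPi_mul_statPi {u : ZMod (numEdges E) → V}
    [NeZero (numEdges E)] (hu : IsEulerCircuit E u) (f : V → ℝ) :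
    ∑ x, ∑ y, (f x - f y) ^ 2 * statPi E x * statPi E y =
      (∑ i, ∑ j, (f (u i) - f (u j)) ^ 2) / numEdges E ^ 2 := by
  have hvisits : ∑ i, ∑ j, (f (u i) - f (u j)) ^ 2 =
      ∑ x, edeg E x * ∑ y, edeg E y * (f x - f y) ^ 2 := by
    rw [← hu.sum_comp fun x => ∑ y, edeg E y * (f x - f y) ^ 2]
    exact sum_congr rfl fun i _ => hu.sum_comp fun y => (f (u i) - f y) ^ 2
  rw [hvisits, sum_div]
  refine sum_congr rfl fun x _ => ?_
  rw [mul_sum, sum_div]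
  refine sum_congr rfl fun y _ => ?_
  simp only [statPi]
  ring

lemma sum_sq_mul_statPi_mul_srw (hdeg : ∀ x, 1 ≤ edeg E x)
    {u : ZMod (numEdges E) → V} [NeZero (numEdges E)] (hu : IsEulerCircuit E u) (f : V → ℝ) :
    ∑ x, ∑ y, (f x - f y) ^ 2 * statPi E x * srw E x y =
      (∑ i, (f (u (i + 1)) - f (u i)) ^ 2) / numEdges E := by
  rw [hu.sum_comp_add_one fun x y => (f y - f x) ^ 2, sum_div]
  refine sum_congr rfl fun x _ => ?_
  rw [sum_div]
  refine sum_congr rfl fun y _ => ?_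
  have hx : (edeg E x : ℝ) ≠ 0 := by have := hdeg x; positivity
  simp only [statPi, srw]
  field_simp
  ring

end Eulerian

section Cycle

open ZMod Complex ComplexConjugate

variable {N : ℕ} [NeZero N]

lemma sum_stdAddChar_mul (k : ZMod N) :
    ∑ j : ZMod N, stdAddChar (j * k) = if k = 0 then (N : ℂ) else 0 := by
  rw [AddChar.sum_mulShift k (isPrimitive_stdAddChar N), ZMod.card]
  split_ifs <;> simp

lemma sum_normSq_dft (Φ : ZMod N → ℂ) :
    ∑ k, normSq (𝓕 Φ k) = N * ∑ j, normSq (Φ j) := by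
  apply ofReal_injective
  push_cast
  simp_rw [← mul_conj]
  calc ∑ k, 𝓕 Φ k * conj (𝓕 Φ k)
      = ∑ j, ∑ l, Φ j * conj (Φ l) * ∑ k, stdAddChar (k * (l - j)) := by
        simp_rw [dft_apply, map_sum, smul_eq_mul, map_mul, ← AddChar.map_neg_eq_conj, neg_neg,
          sum_mul_sum, mul_sum]
        rw [sum_comm]
        refine sum_congr rfl fun j _ => ?_
        rw [sum_comm]
        refine sum_congr rfl fun l _ => sum_congr rfl fun k _ => ?_
        rw [mul_sub, mul_comm k l, sub_eq_add_neg, AddChar.map_add_eq_mul, mul_comm j k]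
        ring
    _ = N * ∑ j, Φ j * conj (Φ j) := by
        simp [sum_stdAddChar_mul, sub_eq_zero, mul_sum, mul_comm]

lemma dft_comp_add_right (Φ : ZMod N → ℂ) (c k : ZMod N) :
    𝓕 (fun j => Φ (j + c)) k = stdAddChar (c * k) * 𝓕 Φ k := by
  simp_rw [dft_apply, smul_eq_mul, mul_sum]
  refine Fintype.sum_equiv (Equiv.addRight c) _ _ fun j => ?_
  rw [Equiv.coe_addRight, ← mul_assoc, ← AddChar.map_add_eq_mul]
  ring_nf

lemma normSq_stdAddChar_sub_one (x : ZMod N) :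
    normSq (stdAddChar x - 1) = 2 - 2 * (stdAddChar x).re := by
  have h : normSq (stdAddChar x) = 1 := by
    rw [normSq_eq_norm_sq, AddChar.norm_apply, one_pow]
  rw [normSq_sub, h, map_one, map_one, mul_one]
  ring

lemma stdAddChar_re (k : ZMod N) :
    (stdAddChar k).re = Real.cos (2 * Real.pi * k.val / N) := by
  rw [stdAddChar_apply, toCircle_eq_circleExp, Circle.coe_exp, exp_ofReal_mul_I_re, mul_div_assoc]

lemma sum_sq_sub_comp_add_right (g : ZMod N → ℝ) (c : ZMod N) :
    N * ∑ j, (g (j + c) - g j) ^ 2 =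
      ∑ k, normSq (𝓕 (fun j => (g j : ℂ)) k) * (2 - 2 * (stdAddChar (c * k)).re) := by
  have hdft (k : ZMod N) : 𝓕 (fun j => ((g (j + c) - g j : ℝ) : ℂ)) k =
      (stdAddChar (c * k) - 1) * 𝓕 (fun j => (g j : ℂ)) k := by
    have : (fun j => ((g (j + c) - g j : ℝ) : ℂ)) =
        (fun j => (g (j + c) : ℂ)) - fun j => (g j : ℂ) := by ext; push_cast; rfl
    have hshift := dft_comp_add_right (fun j => (g j : ℂ)) c k
    rw [this, map_sub, Pi.sub_apply, hshift]
    ring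
  have h := sum_normSq_dft fun j => ((g (j + c) - g j : ℝ) : ℂ)
  simp_rw [hdft, map_mul, normSq_stdAddChar_sub_one, normSq_ofReal, ← sq] at h
  rw [← h]
  exact sum_congr rfl fun k _ => mul_comm _ _

lemma cos_le_cos_two_pi_div {v : ℝ} (hv₁ : 1 ≤ v) (hv₂ : v ≤ N - 1) :
    Real.cos (2 * Real.pi * v / N) ≤ Real.cos (2 * Real.pi / N) := by
  set x := 2 * Real.pi / N
  have hx : 0 ≤ x := by positivity
  have hxN : x * N = 2 * Real.pi := div_mul_cancel₀ _ (NeZero.ne _)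
  rw [show 2 * Real.pi * v / N = x * v by ring]
  rcases le_total (2 * v) N with hv | hv
  · apply Real.cos_le_cos_of_nonneg_of_le_pi hx
    · nlinarith [mul_le_mul_of_nonneg_left hv hx]
    · exact le_mul_of_one_le_right hx hv₁
  · rw [← Real.cos_two_pi_sub]
    apply Real.cos_le_cos_of_nonneg_of_le_pi hx
    · nlinarith [mul_le_mul_of_nonneg_left hv hx]
    · nlinarith [mul_le_mul_of_nonneg_left hv₂ hx]

lemma stdAddChar_re_le (k : ZMod N) (hk : k ≠ 0) :
    (stdAddChar k).re ≤ Real.cos (2 * Real.pi / N) := by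
  rw [stdAddChar_re]
  have h₁ : 1 ≤ k.val := Nat.one_le_iff_ne_zero.mpr ((ZMod.val_ne_zero k).mpr hk)
  have h₂ : k.val + 1 ≤ N := k.val_lt
  exact cos_le_cos_two_pi_div (by exact_mod_cast h₁) (by rw [le_sub_iff_add_le]; exact_mod_cast h₂)

lemma sum_stdAddChar_mul_re (k : ZMod N) :
    ∑ c : ZMod N, (stdAddChar (c * k)).re = if k = 0 then (N : ℝ) else 0 := by
  rw [← re_sum, sum_stdAddChar_mul]
  split_ifs <;> simp

theorem cycle_poincare (g : ZMod N → ℝ) :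
    (1 - Real.cos (2 * Real.pi / N)) * ∑ i, ∑ j, (g i - g j) ^ 2 ≤
      N * ∑ i, (g (i + 1) - g i) ^ 2 := by
  set A : ZMod N → ℝ := fun k => normSq (𝓕 (fun j => (g j : ℂ)) k)
  have hvar : N * ∑ i, ∑ j, (g i - g j) ^ 2 =
      ∑ k, A k * (2 * N - 2 * if k = 0 then (N : ℝ) else 0) := by
    calc (N : ℝ) * ∑ i, ∑ j, (g i - g j) ^ 2
        = N * ∑ j, ∑ c, (g (j + c) - g j) ^ 2 := by
          rw [Finset.sum_comm]
          congr 1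
          refine sum_congr rfl fun j _ => ?_
          exact (Fintype.sum_equiv (Equiv.addLeft j) _ (fun i => (g i - g j) ^ 2)
            fun c => rfl).symm
      _ = ∑ c, N * ∑ j, (g (j + c) - g j) ^ 2 := by rw [Finset.sum_comm, mul_sum]
      _ = ∑ k, A k * ∑ c, (2 - 2 * (stdAddChar (c * k)).re) := by
          simp_rw [sum_sq_sub_comp_add_right, mul_sum]
          exact Finset.sum_comm
      _ = _ := by
          simp_rw [sum_sub_distrib, ← mul_sum, sum_stdAddChar_mul_re, sum_const, card_univ,
            ZMod.card, nsmul_eq_mul, mul_comm (N : ℝ) 2]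
  have hgap : N * ∑ i, (g (i + 1) - g i) ^ 2 = ∑ k, A k * (2 - 2 * (stdAddChar k).re) := by
    simp_rw [sum_sq_sub_comp_add_right, one_mul, A]
  have hN : (0 : ℝ) < N := Nat.cast_pos.mpr (NeZero.pos N)
  refine le_of_mul_le_mul_left ?_ hN
  rw [mul_left_comm, hvar, hgap, mul_sum, mul_sum]
  refine sum_le_sum fun k _ => ?_
  have hA : 0 ≤ A k := normSq_nonneg _
  by_cases hk : k = 0
  · simp [hk]
  · have := stdAddChar_re_le k hk
    simp only [hk, if_false]
    nlinarith [mul_nonneg hA hN.le]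

end Cycle

/-- The simple random walk on an Eulerian graph with `m` edges has spectral
gap at least `1 - cos(2π/m)`. -/
theorem stmt0 {V : Type*} [Fintype V] [Nonempty V] (E : V → V → ℕ)
    (hbal : ∀ x, edeg E x = ∑ y, E y x)
    (hdegpos : ∀ x, 1 ≤ edeg E x)
    (hconn : ∀ x y : V, Relation.ReflTransGen (fun a b => 0 < E a b) x y)
    (f : V → ℝ) :
    (1 - Real.cos (2 * Real.pi / (numEdges E : ℝ))) *
        (∑ x, ∑ y, (f x - f y) ^ 2 * statPi E x * statPi E y) ≤
      ∑ x, ∑ y, (f x - f y) ^ 2 * statPi E x * srw E x y := by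
  obtain ⟨x₀⟩ := ‹Nonempty V›
  have : NeZero (numEdges E) := ⟨(Nat.lt_of_lt_of_le (hdegpos x₀) (edeg_le_numEdges E x₀)).ne'⟩
  obtain ⟨u, hu⟩ := exists_isEulerCircuit hbal hconn
  have hm : (0 : ℝ) < numEdges E := Nat.cast_pos.mpr (NeZero.pos _)
  rw [sum_sq_mul_statPi_mul_statPi hu, sum_sq_mul_statPi_mul_srw hdegpos hu, mul_div_assoc',
    div_le_div_iff₀ (by positivity) hm]
  linear_combination (numEdges E : ℝ) * cycle_poincare fun i => f (u i)

end Stmt0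
end
end

section
/- Let (V, P) be a finite irreducible Markov chain with stationary distribution π, and let f : [0,1] → ℝ be nonnegative and satisfy 0 < f(a) ≤ f(1−a) for all a ∈ (0, 1/2]. Then for every natural number t, max_{x∈V} ‖P^t(x,·) − π‖_TV ≤ M₁ · M₂ · C_f^t, where M₁ = max{π(A)(1 − π(A))/f(π(A)) : A ⊆ V nonempty, π(A) ≤ 1/2} and M₂ = max_{x∈V} f(π(x))/π(x). -/
/-!
Evolving sets. Let `K` be the transition operator of the evolving-set process,
`(K φ)(A) = ∫₀¹ φ(A_u) du`. On the point indicators `B ↦ 1[y ∈ B]` it acts as the time reversal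
of `P`, which gives `π(y) · (Kᵗ 1[y ∈ ·])({x}) = π(x) Pᵗ(x,y)` and `Kᵗ π = π`; summing
`|1[y ∈ B] − π(B)|` against `π(y)` then yields
`‖Pᵗ(x,·) − π‖_TV ≤ Kᵗ[π(B)(1 − π(B))]({x}) / π(x)`.

The potential `ψ(B) = f(min(π(B), 1 − π(B)))`, set to `0` at the absorbing states `∅` and `V`,
satisfies `K ψ ≤ C_f ψ`: for `π(A) ≤ 1/2` this is the definition of `C_f` together with
`ψ ≤ f ∘ π`, and the reflection `u ↦ 1 − u` turns the evolving sets of `Aᶜ` into the complements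
of those of `A`, so both sides are invariant under complementation. Hence `Kᵗ ψ ≤ C_fᵗ ψ`, and
`π(B)(1 − π(B)) ≤ M₁ ψ(B)`, `ψ({x}) ≤ f(π(x))` finish the bound.
-/

open scoped Classical

noncomputable section

namespace Stmt8

variable {V : Type*} [Fintype V]

/-- measure of a finite set of states under `pi`. -/
def meas (pi : V → ℝ) (A : Finset V) : ℝ := ∑ x ∈ A, pi x

/-- ergodic flow `Q(A,y) = ∑_{x∈A} π(x)P(x,y)` from a set to a point. -/
def flowPt (P : V → V → ℝ) (pi : V → ℝ) (A : Finset V) (y : V) : ℝ :=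
  ∑ x ∈ A, pi x * P x y

/-- the evolving set `A_u = {y : Q(A,y) ≥ u·π(y)}`. -/
def evolve (P : V → V → ℝ) (pi : V → ℝ) (A : Finset V) (u : ℝ) : Finset V :=
  Finset.univ.filter fun y => u * pi y ≤ flowPt P pi A y

/-- `f`-congestion of a set: `C_f(A) = (∫₀¹ f(π(A_u)) du)/f(π(A))`. -/
def fCong (f : ℝ → ℝ) (P : V → V → ℝ) (pi : V → ℝ) (A : Finset V) : ℝ :=
  (∫ u in (0:ℝ)..1, f (meas pi (evolve P pi A u))) / f (meas pi A)

/-- `C_f = max{C_f(A) : A nonempty, π(A) ≤ 1/2}`. -/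
def fCongMax (f : ℝ → ℝ) (P : V → V → ℝ) (pi : V → ℝ) : ℝ :=
  sSup {c | ∃ A : Finset V, A.Nonempty ∧ meas pi A ≤ 1 / 2 ∧ c = fCong f P pi A}

/-- total variation distance between two distributions on `V`. -/
def tv (σ τ : V → ℝ) : ℝ := (1 / 2) * ∑ y, |σ y - τ y|

open MeasureTheory

section Measure

variable {pi : V → ℝ}

omit [Fintype V] in
lemma meas_nonneg (hpi : ∀ x, 0 ≤ pi x) (A : Finset V) : 0 ≤ meas pi A :=
  Finset.sum_nonneg fun x _ => hpi x

omit [Fintype V] in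
lemma meas_pos (hpi : ∀ x, 0 < pi x) {A : Finset V} (hA : A.Nonempty) : 0 < meas pi A :=
  Finset.sum_pos (fun x _ => hpi x) hA

lemma meas_compl (hpi : ∑ x, pi x = 1) (A : Finset V) : meas pi Aᶜ = 1 - meas pi A := by
  rw [← hpi, ← Finset.sum_add_sum_compl A pi, meas, meas, add_sub_cancel_left]

lemma meas_le_one (hpi0 : ∀ x, 0 ≤ pi x) (hpi1 : ∑ x, pi x = 1) (A : Finset V) :
    meas pi A ≤ 1 := by
  linarith [meas_compl hpi1 A, meas_nonneg hpi0 Aᶜ]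

lemma meas_lt_one (hpi0 : ∀ x, 0 < pi x) (hpi1 : ∑ x, pi x = 1) {A : Finset V}
    (hA : Aᶜ.Nonempty) : meas pi A < 1 := by
  linarith [meas_compl hpi1 A, meas_pos hpi0 hA]

end Measure

section Flow

variable {P : V → V → ℝ} {pi : V → ℝ}

lemma mem_evolve {A : Finset V} {u : ℝ} {y : V} :
    y ∈ evolve P pi A u ↔ u * pi y ≤ flowPt P pi A y := by
  simp [evolve]

omit [Fintype V] in
lemma flowPt_nonneg (hP : ∀ x y, 0 ≤ P x y) (hpi : ∀ x, 0 ≤ pi x) (A : Finset V) (y : V) :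
    0 ≤ flowPt P pi A y :=
  Finset.sum_nonneg fun x _ => mul_nonneg (hpi x) (hP x y)

lemma flowPt_add_flowPt_compl (hstat : ∀ y, ∑ x, pi x * P x y = pi y) (A : Finset V) (y : V) :
    flowPt P pi A y + flowPt P pi Aᶜ y = pi y := by
  rw [← hstat y, ← Finset.sum_add_sum_compl A, flowPt, flowPt]

lemma flowPt_le (hP : ∀ x y, 0 ≤ P x y) (hpi : ∀ x, 0 ≤ pi x)
    (hstat : ∀ y, ∑ x, pi x * P x y = pi y) (A : Finset V) (y : V) :
    flowPt P pi A y ≤ pi y := by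
  linarith [flowPt_add_flowPt_compl hstat A y, flowPt_nonneg hP hpi Aᶜ y]

lemma evolve_empty {u : ℝ} (hpi : ∀ x, 0 < pi x) (hu : 0 < u) : evolve P pi ∅ u = ∅ := by
  ext y
  simp [mem_evolve, flowPt, not_le, mul_pos hu (hpi y)]

lemma evolve_compl_one_sub (hstat : ∀ y, ∑ x, pi x * P x y = pi y) {A : Finset V} {u : ℝ}
    (hu : ∀ y, flowPt P pi A y ≠ u * pi y) :
    evolve P pi Aᶜ (1 - u) = (evolve P pi A u)ᶜ := by
  ext y
  have := flowPt_add_flowPt_compl hstat A y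
  rw [mem_evolve, Finset.mem_compl, mem_evolve, not_le]
  constructor
  · intro h
    exact lt_of_le_of_ne (by linarith) (hu y)
  · intro h
    linarith

end Flow

section Operator

variable (P : V → V → ℝ) (pi : V → ℝ)

lemma measurableSet_evolve_eq (A S : Finset V) :
    MeasurableSet {u : ℝ | evolve P pi A u = S} := by
  simp only [Finset.ext_iff, mem_evolve]
  refine measurableSet_setOfPred.mpr (Measurable.forall fun y => Measurable.iff ?_ measurable_const)
  exact measurableSet_setOfPred.mp (measurableSet_le (by fun_prop) measurable_const)

lemma intervalIntegrable_comp_evolve (φ : Finset V → ℝ) (A : Finset V) :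
    IntervalIntegrable (fun u => φ (evolve P pi A u)) volume 0 1 := by
  have hsum : (fun u => φ (evolve P pi A u)) =
      ∑ S, {u | evolve P pi A u = S}.indicator (fun _ => φ S) := by
    ext u
    simp [Set.indicator_apply]
  rw [hsum]
  refine IntervalIntegrable.sum _ fun S _ => ?_
  have hconst : IntervalIntegrable (fun _ => φ S) volume (0:ℝ) 1 := intervalIntegrable_const
  exact ⟨hconst.1.indicator (measurableSet_evolve_eq P pi A S),
    hconst.2.indicator (measurableSet_evolve_eq P pi A S)⟩

def evolveOp : Module.End ℝ (Finset V → ℝ) where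
  toFun φ A := ∫ u in (0:ℝ)..1, φ (evolve P pi A u)
  map_add' φ ψ := by
    ext A
    exact intervalIntegral.integral_add (intervalIntegrable_comp_evolve P pi φ A)
      (intervalIntegrable_comp_evolve P pi ψ A)
  map_smul' c φ := by
    ext A
    exact intervalIntegral.integral_const_mul c _

lemma evolveOp_apply (φ : Finset V → ℝ) (A : Finset V) :
    evolveOp P pi φ A = ∫ u in (0:ℝ)..1, φ (evolve P pi A u) := rfl

variable {P pi}

lemma evolveOp_mono {φ ψ : Finset V → ℝ} (h : φ ≤ ψ) : evolveOp P pi φ ≤ evolveOp P pi ψ :=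
  fun A => intervalIntegral.integral_mono_on zero_le_one
    (intervalIntegrable_comp_evolve P pi φ A) (intervalIntegrable_comp_evolve P pi ψ A)
    fun _ _ => h _

lemma evolveOp_pow_mono {φ ψ : Finset V → ℝ} (h : φ ≤ ψ) (t : ℕ) :
    (evolveOp P pi ^ t) φ ≤ (evolveOp P pi ^ t) ψ := by
  induction t with
  | zero => exact h
  | succ t ih => rw [pow_succ', Module.End.mul_apply, Module.End.mul_apply]; exact evolveOp_mono ih

lemma abs_evolveOp_pow_le (φ : Finset V → ℝ) (t : ℕ) (A : Finset V) :
    |(evolveOp P pi ^ t) φ A| ≤ (evolveOp P pi ^ t) |φ| A := by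
  refine abs_le.mpr ⟨?_, evolveOp_pow_mono (fun B => le_abs_self (φ B)) t A⟩
  rw [← Pi.neg_apply, ← map_neg]
  exact evolveOp_pow_mono (fun B => neg_abs_le (φ B)) t A

lemma evolveOp_pow_le_smul {φ : Finset V → ℝ} {c : ℝ} (hc : 0 ≤ c)
    (h : evolveOp P pi φ ≤ c • φ) (t : ℕ) : (evolveOp P pi ^ t) φ ≤ c ^ t • φ := by
  induction t with
  | zero => simp
  | succ t ih =>
    calc (evolveOp P pi ^ (t + 1)) φ = (evolveOp P pi ^ t) (evolveOp P pi φ) := by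
          rw [pow_succ, Module.End.mul_apply]
      _ ≤ (evolveOp P pi ^ t) (c • φ) := evolveOp_pow_mono h t
      _ = c • (evolveOp P pi ^ t) φ := map_smul _ _ _
      _ ≤ c • c ^ t • φ := smul_le_smul_of_nonneg_left ih hc
      _ = c ^ (t + 1) • φ := by rw [smul_smul, pow_succ']

lemma evolveOp_apply_empty (hpi : ∀ x, 0 < pi x) (φ : Finset V → ℝ) :
    evolveOp P pi φ ∅ = φ ∅ := by
  rw [evolveOp_apply, intervalIntegral.integral_congr_ae (g := fun _ => φ ∅),
    intervalIntegral.integral_const, sub_zero, one_smul]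
  refine Filter.Eventually.of_forall fun u hu => ?_
  rw [Set.uIoc_of_le zero_le_one] at hu
  rw [evolve_empty hpi hu.1]

lemma evolveOp_apply_compl (hpi : ∀ x, 0 < pi x) (hstat : ∀ y, ∑ x, pi x * P x y = pi y)
    (φ : Finset V → ℝ) (A : Finset V) :
    evolveOp P pi φ Aᶜ = evolveOp P pi (fun B => φ Bᶜ) A := by
  have hae : ∀ᵐ u : ℝ, ∀ y, flowPt P pi A y ≠ u * pi y := by
    refine ae_all_iff.mpr fun y => ?_
    filter_upwards [Measure.ae_ne volume (flowPt P pi A y / pi y)] with u hu heq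
    exact hu (by rw [heq, mul_div_cancel_right₀ _ (hpi y).ne'])
  calc evolveOp P pi φ Aᶜ = ∫ u in (0:ℝ)..1, φ (evolve P pi Aᶜ (1 - u)) := by
        rw [evolveOp_apply, intervalIntegral.integral_comp_sub_left (fun u => φ (evolve P pi Aᶜ u))]
        norm_num
    _ = evolveOp P pi (fun B => φ Bᶜ) A :=
        intervalIntegral.integral_congr_ae
          (hae.mono fun u hu _ => by rw [evolve_compl_one_sub hstat hu])

end Operator

section Duality

variable {P : V → V → ℝ} {pi : V → ℝ}

def memInd (y : V) (B : Finset V) : ℝ := if y ∈ B then 1 else 0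

lemma meas_eq_sum_smul_memInd (pi : V → ℝ) : meas pi = ∑ y, pi y • memInd y := by
  ext B
  simp [meas, memInd, Finset.sum_apply]

lemma sum_mul_memInd (g : V → ℝ) (B : Finset V) : ∑ z, g z * memInd z B = ∑ z ∈ B, g z := by
  simp [memInd]

lemma mul_evolveOp_memInd (hP : ∀ x y, 0 ≤ P x y) (hpi : ∀ x, 0 < pi x)
    (hstat : ∀ y, ∑ x, pi x * P x y = pi y) (y : V) (A : Finset V) :
    pi y * evolveOp P pi (memInd y) A = flowPt P pi A y := by
  set c := flowPt P pi A y / pi y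
  have hc : c ∈ Set.Icc (0:ℝ) 1 :=
    ⟨div_nonneg (flowPt_nonneg hP (fun x => (hpi x).le) A y) (hpi y).le,
      (div_le_one (hpi y)).mpr (flowPt_le hP (fun x => (hpi x).le) hstat A y)⟩
  have hind : (fun u => memInd y (evolve P pi A u)) = {u | u ≤ c}.indicator 1 := by
    ext u
    simp [memInd, Set.indicator_apply, mem_evolve, c, le_div_iff₀ (hpi y)]
  rw [evolveOp_apply, hind, intervalIntegral.integral_indicator hc]
  simp [c, mul_div_cancel₀ _ (hpi y).ne']

lemma smul_evolveOp_memInd (hP : ∀ x y, 0 ≤ P x y) (hpi : ∀ x, 0 < pi x)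
    (hstat : ∀ y, ∑ x, pi x * P x y = pi y) (y : V) :
    pi y • evolveOp P pi (memInd y) = ∑ z, (pi z * P z y) • memInd z := by
  ext A
  simp only [Pi.smul_apply, smul_eq_mul, Finset.sum_apply, mul_evolveOp_memInd hP hpi hstat,
    sum_mul_memInd, flowPt]

lemma smul_evolveOp_pow_memInd (hP : ∀ x y, 0 ≤ P x y) (hpi : ∀ x, 0 < pi x)
    (hstat : ∀ y, ∑ x, pi x * P x y = pi y) (t : ℕ) (y : V) :
    pi y • (evolveOp P pi ^ t) (memInd y) = ∑ z, (pi z * (Matrix.of P ^ t) z y) • memInd z := by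
  induction t generalizing y with
  | zero =>
    simp [Matrix.one_apply]
  | succ t ih =>
    calc pi y • (evolveOp P pi ^ (t + 1)) (memInd y)
        = (evolveOp P pi ^ t) (pi y • evolveOp P pi (memInd y)) := by
          rw [pow_succ, Module.End.mul_apply, map_smul]
      _ = ∑ z, P z y • (pi z • (evolveOp P pi ^ t) (memInd z)) := by
          rw [smul_evolveOp_memInd hP hpi hstat, map_sum]
          simp only [map_smul, smul_smul, mul_comm]
      _ = ∑ z, P z y • ∑ w, (pi w * (Matrix.of P ^ t) w z) • memInd w := by simp only [ih]
      _ = ∑ w, (pi w * (Matrix.of P ^ (t + 1)) w y) • memInd w := by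
          simp only [Finset.smul_sum, smul_smul, pow_succ, Matrix.mul_apply, Finset.mul_sum,
            Finset.sum_smul, Matrix.of_apply]
          rw [Finset.sum_comm]
          simp only [mul_comm, mul_left_comm]

lemma evolveOp_meas (hP0 : ∀ x y, 0 ≤ P x y) (hP1 : ∀ x, ∑ y, P x y = 1)
    (hpi : ∀ x, 0 < pi x) (hstat : ∀ y, ∑ x, pi x * P x y = pi y) :
    evolveOp P pi (meas pi) = meas pi := by
  simp only [meas_eq_sum_smul_memInd pi, map_sum, map_smul, smul_evolveOp_memInd hP0 hpi hstat]
  rw [Finset.sum_comm]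
  simp only [← Finset.sum_smul, ← Finset.mul_sum, hP1, mul_one]

lemma evolveOp_pow_meas (hP0 : ∀ x y, 0 ≤ P x y) (hP1 : ∀ x, ∑ y, P x y = 1)
    (hpi : ∀ x, 0 < pi x) (hstat : ∀ y, ∑ x, pi x * P x y = pi y) (t : ℕ) :
    (evolveOp P pi ^ t) (meas pi) = meas pi := by
  rw [Module.End.pow_apply, Function.iterate_fixed (evolveOp_meas hP0 hP1 hpi hstat)]

lemma mul_evolveOp_pow_memInd_singleton (hP : ∀ x y, 0 ≤ P x y) (hpi : ∀ x, 0 < pi x)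
    (hstat : ∀ y, ∑ x, pi x * P x y = pi y) (t : ℕ) (x y : V) :
    pi y * (evolveOp P pi ^ t) (memInd y) {x} = pi x * (Matrix.of P ^ t) x y := by
  have h := congrFun (smul_evolveOp_pow_memInd hP hpi hstat t y) {x}
  simpa [Finset.sum_apply, sum_mul_memInd] using h

end Duality

section TotalVariation

variable {P : V → V → ℝ} {pi : V → ℝ}

def measVar (pi : V → ℝ) (B : Finset V) : ℝ := meas pi B * (1 - meas pi B)

lemma sum_mul_abs_memInd_sub_meas (hpi0 : ∀ x, 0 ≤ pi x) (hpi1 : ∑ x, pi x = 1)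
    (B : Finset V) : ∑ y, pi y * |memInd y B - meas pi B| = 2 * measVar pi B := by
  have hm0 := meas_nonneg hpi0 B
  have hm1 := meas_le_one hpi0 hpi1 B
  have hin : ∀ y ∈ B, pi y * |memInd y B - meas pi B| = pi y * (1 - meas pi B) := by
    intro y hy
    rw [memInd, if_pos hy, abs_of_nonneg (by linarith)]
  have hout : ∀ y ∈ Bᶜ, pi y * |memInd y B - meas pi B| = pi y * meas pi B := by
    intro y hy
    rw [memInd, if_neg (Finset.mem_compl.mp hy), zero_sub, abs_neg, abs_of_nonneg hm0]
  rw [← Finset.sum_add_sum_compl B, Finset.sum_congr rfl hin, Finset.sum_congr rfl hout,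
    ← Finset.sum_mul, ← Finset.sum_mul]
  change meas pi B * _ + meas pi Bᶜ * _ = _
  rw [meas_compl hpi1, measVar]
  ring

lemma tv_le_evolveOp_pow_measVar (hP0 : ∀ x y, 0 ≤ P x y) (hP1 : ∀ x, ∑ y, P x y = 1)
    (hpi0 : ∀ x, 0 < pi x) (hpi1 : ∑ x, pi x = 1) (hstat : ∀ y, ∑ x, pi x * P x y = pi y)
    (t : ℕ) (x : V) :
    tv (fun y => (Matrix.of P ^ t) x y) pi ≤ (evolveOp P pi ^ t) (measVar pi) {x} / pi x := by
  set K := evolveOp P pi ^ t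
  have hx := hpi0 x
  have hdiff : ∀ y, (Matrix.of P ^ t) x y - pi y = pi y / pi x * K (memInd y - meas pi) {x} := by
    intro y
    have h := mul_evolveOp_pow_memInd_singleton hP0 hpi0 hstat t x y
    rw [map_sub, evolveOp_pow_meas hP0 hP1 hpi0 hstat, Pi.sub_apply]
    simp only [meas, Finset.sum_singleton]
    field_simp
    linarith
  have habs : ∀ y, |(Matrix.of P ^ t) x y - pi y| ≤ pi y / pi x * K |memInd y - meas pi| {x} := by
    intro y
    rw [hdiff, abs_mul, abs_of_nonneg (div_nonneg (hpi0 y).le hx.le)]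
    exact mul_le_mul_of_nonneg_left (abs_evolveOp_pow_le _ t _) (div_nonneg (hpi0 y).le hx.le)
  have hvar : ∑ y, pi y • |memInd y - meas pi| = (2 : ℝ) • measVar pi := by
    ext B
    simpa [Finset.sum_apply] using sum_mul_abs_memInd_sub_meas (fun x => (hpi0 x).le) hpi1 B
  have hsum : ∑ y, pi y / pi x * K |memInd y - meas pi| {x} = 2 * K (measVar pi) {x} / pi x := by
    have h := congrFun (congrArg K hvar) {x}
    simp only [map_sum, map_smul, Finset.sum_apply, Pi.smul_apply, smul_eq_mul] at h
    rw [← h, Finset.sum_div]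
    exact Finset.sum_congr rfl fun y _ => by ring
  calc tv (fun y => (Matrix.of P ^ t) x y) pi
      ≤ 1 / 2 * ∑ y, pi y / pi x * K |memInd y - meas pi| {x} := by
        unfold tv
        gcongr with y
        exact habs y
    _ = K (measVar pi) {x} / pi x := by rw [hsum]; ring

end TotalVariation

section Congestion

variable {P : V → V → ℝ} {pi : V → ℝ} {f : ℝ → ℝ}

def supSmallSets (pi : V → ℝ) (g : Finset V → ℝ) : ℝ :=
  sSup {c | ∃ A : Finset V, A.Nonempty ∧ meas pi A ≤ 1 / 2 ∧ c = g A}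

lemma le_supSmallSets (g : Finset V → ℝ) {A : Finset V} (hA : A.Nonempty)
    (hA' : meas pi A ≤ 1 / 2) : g A ≤ supSmallSets pi g :=
  le_csSup ((Set.finite_range g).subset (by rintro c ⟨A, -, -, rfl⟩; exact ⟨A, rfl⟩)).bddAbove
    ⟨A, hA, hA', rfl⟩

omit [Fintype V] in
lemma supSmallSets_nonneg {g : Finset V → ℝ}
    (hg : ∀ A : Finset V, A.Nonempty → meas pi A ≤ 1 / 2 → 0 ≤ g A) : 0 ≤ supSmallSets pi g :=
  Real.sSup_nonneg (by rintro c ⟨A, hA, hA', rfl⟩; exact hg A hA hA')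

def symmF (f : ℝ → ℝ) (pi : V → ℝ) (B : Finset V) : ℝ :=
  if B.Nonempty ∧ Bᶜ.Nonempty then f (min (meas pi B) (1 - meas pi B)) else 0

lemma symmF_compl (hpi : ∑ x, pi x = 1) (B : Finset V) : symmF f pi Bᶜ = symmF f pi B := by
  simp only [symmF, compl_compl, meas_compl hpi, sub_sub_cancel, and_comm, min_comm]

lemma symmF_empty : symmF f pi (∅ : Finset V) = 0 := by
  simp [symmF]

lemma symmF_of_small (hpi : ∑ x, pi x = 1) {B : Finset V} (hB : B.Nonempty)
    (hB' : meas pi B ≤ 1 / 2) : symmF f pi B = f (meas pi B) := by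
  have hBc : Bᶜ.Nonempty := by
    by_contra h
    rw [Finset.not_nonempty_iff_eq_empty, Finset.compl_eq_empty_iff] at h
    rw [h, show meas pi Finset.univ = 1 from hpi] at hB'
    norm_num at hB'
  rw [symmF, if_pos ⟨hB, hBc⟩, min_eq_left (by linarith)]

lemma symmF_le (hpi0 : ∀ x, 0 < pi x) (hpi1 : ∑ x, pi x = 1)
    (hf0 : ∀ a ∈ Set.Icc (0:ℝ) 1, 0 ≤ f a)
    (hf : ∀ a : ℝ, 0 < a → a ≤ 1 / 2 → 0 < f a ∧ f a ≤ f (1 - a)) (B : Finset V) :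
    symmF f pi B ≤ f (meas pi B) := by
  unfold symmF
  split_ifs with hB
  · have hm0 := meas_pos hpi0 hB.1
    have hm1 := meas_lt_one hpi0 hpi1 hB.2
    rcases le_total (meas pi B) (1 / 2) with h | h
    · rw [min_eq_left (by linarith)]
    · rw [min_eq_right (by linarith)]
      simpa using (hf (1 - meas pi B) (by linarith) (by linarith)).2
  · exact hf0 _ ⟨meas_nonneg (fun x => (hpi0 x).le) B, meas_le_one (fun x => (hpi0 x).le) hpi1 B⟩

lemma measVar_compl (hpi : ∑ x, pi x = 1) (B : Finset V) : measVar pi Bᶜ = measVar pi B := by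
  rw [measVar, measVar, meas_compl hpi]
  ring

lemma measVar_le_symmF (hpi0 : ∀ x, 0 < pi x) (hpi1 : ∑ x, pi x = 1)
    (hf : ∀ a : ℝ, 0 < a → a ≤ 1 / 2 → 0 < f a) (B : Finset V) :
    measVar pi B ≤ supSmallSets pi (fun A => measVar pi A / f (meas pi A)) * symmF f pi B := by
  wlog hB : meas pi B ≤ 1 / 2 generalizing B with H
  · have := H Bᶜ (by rw [meas_compl hpi1]; linarith)
    rwa [measVar_compl hpi1, symmF_compl hpi1] at this
  rcases B.eq_empty_or_nonempty with rfl | hne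
  · simp [measVar, meas, symmF_empty]
  have hfB : 0 < f (meas pi B) := hf _ (meas_pos hpi0 hne) hB
  calc measVar pi B = measVar pi B / f (meas pi B) * f (meas pi B) := by field_simp
    _ ≤ supSmallSets pi (fun A => measVar pi A / f (meas pi A)) * symmF f pi B := by
        rw [symmF_of_small hpi1 hne hB]
        exact mul_le_mul_of_nonneg_right
          (le_supSmallSets (fun A => measVar pi A / f (meas pi A)) hne hB) hfB.le

omit [Fintype V] in
lemma supSmallSets_measVar_div_nonneg (hpi : ∀ x, 0 < pi x)
    (hf : ∀ a : ℝ, 0 < a → a ≤ 1 / 2 → 0 < f a) :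
    0 ≤ supSmallSets pi (fun A => measVar pi A / f (meas pi A)) :=
  supSmallSets_nonneg fun A hA hA' =>
    div_nonneg (mul_nonneg (meas_nonneg (fun x => (hpi x).le) A) (by linarith))
      (hf _ (meas_pos hpi hA) hA').le

lemma fCongMax_nonneg (hpi0 : ∀ x, 0 < pi x) (hpi1 : ∑ x, pi x = 1)
    (hf0 : ∀ a ∈ Set.Icc (0:ℝ) 1, 0 ≤ f a) (hf : ∀ a : ℝ, 0 < a → a ≤ 1 / 2 → 0 < f a) :
    0 ≤ fCongMax f P pi :=
  supSmallSets_nonneg fun _ hA hA' => div_nonneg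
    (intervalIntegral.integral_nonneg zero_le_one fun _ _ =>
      hf0 _ ⟨meas_nonneg (fun x => (hpi0 x).le) _, meas_le_one (fun x => (hpi0 x).le) hpi1 _⟩)
    (hf _ (meas_pos hpi0 hA) hA').le

lemma evolveOp_symmF_le (hpi0 : ∀ x, 0 < pi x) (hpi1 : ∑ x, pi x = 1)
    (hstat : ∀ y, ∑ x, pi x * P x y = pi y) (hf0 : ∀ a ∈ Set.Icc (0:ℝ) 1, 0 ≤ f a)
    (hf : ∀ a : ℝ, 0 < a → a ≤ 1 / 2 → 0 < f a ∧ f a ≤ f (1 - a)) :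
    evolveOp P pi (symmF f pi) ≤ fCongMax f P pi • symmF f pi := by
  intro A
  wlog hA : meas pi A ≤ 1 / 2 generalizing A with H
  · have := H Aᶜ (by rw [meas_compl hpi1]; linarith)
    simpa only [evolveOp_apply_compl hpi0 hstat, symmF_compl hpi1, Pi.smul_apply] using this
  rcases A.eq_empty_or_nonempty with rfl | hne
  · simp [evolveOp_apply_empty hpi0, symmF_empty]
  have hfA : 0 < f (meas pi A) := (hf _ (meas_pos hpi0 hne) hA).1
  calc evolveOp P pi (symmF f pi) A ≤ ∫ u in (0:ℝ)..1, f (meas pi (evolve P pi A u)) :=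
        evolveOp_mono (symmF_le hpi0 hpi1 hf0 hf) A
    _ = fCong f P pi A * f (meas pi A) := by rw [fCong, div_mul_cancel₀ _ hfA.ne']
    _ ≤ fCongMax f P pi * symmF f pi A := by
        rw [symmF_of_small hpi1 hne hA]
        exact mul_le_mul_of_nonneg_right (le_supSmallSets (pi := pi) _ hne hA) hfA.le

lemma tv_le_congestion (hP0 : ∀ x y, 0 ≤ P x y) (hP1 : ∀ x, ∑ y, P x y = 1)
    (hpi0 : ∀ x, 0 < pi x) (hpi1 : ∑ x, pi x = 1) (hstat : ∀ y, ∑ x, pi x * P x y = pi y)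
    (hf0 : ∀ a ∈ Set.Icc (0:ℝ) 1, 0 ≤ f a)
    (hf : ∀ a : ℝ, 0 < a → a ≤ 1 / 2 → 0 < f a ∧ f a ≤ f (1 - a)) (t : ℕ) (x : V) :
    tv (fun y => (Matrix.of P ^ t) x y) pi ≤
      supSmallSets pi (fun A => measVar pi A / f (meas pi A)) * (f (pi x) / pi x) *
        fCongMax f P pi ^ t := by
  set M := supSmallSets pi (fun A => measVar pi A / f (meas pi A))
  set C := fCongMax f P pi
  have hM : 0 ≤ M := supSmallSets_measVar_div_nonneg hpi0 fun a ha ha' => (hf a ha ha').1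
  have hC : 0 ≤ C := fCongMax_nonneg hpi0 hpi1 hf0 fun a ha ha' => (hf a ha ha').1
  have hψ : (evolveOp P pi ^ t) (symmF f pi) ≤ C ^ t • symmF f pi :=
    evolveOp_pow_le_smul hC (evolveOp_symmF_le hpi0 hpi1 hstat hf0 hf) t
  have hψx : symmF f pi {x} ≤ f (pi x) := by
    simpa [meas] using symmF_le hpi0 hpi1 hf0 hf {x}
  calc tv (fun y => (Matrix.of P ^ t) x y) pi ≤ (evolveOp P pi ^ t) (measVar pi) {x} / pi x :=
        tv_le_evolveOp_pow_measVar hP0 hP1 hpi0 hpi1 hstat t x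
    _ ≤ (evolveOp P pi ^ t) (M • symmF f pi) {x} / pi x := by
        refine div_le_div_of_nonneg_right ?_ (hpi0 x).le
        exact evolveOp_pow_mono
          (fun B => measVar_le_symmF hpi0 hpi1 (fun a ha ha' => (hf a ha ha').1) B) t {x}
    _ ≤ M * (C ^ t * f (pi x)) / pi x := by
        rw [map_smul, Pi.smul_apply, smul_eq_mul]
        refine div_le_div_of_nonneg_right (mul_le_mul_of_nonneg_left ?_ hM) (hpi0 x).le
        exact (hψ {x}).trans (mul_le_mul_of_nonneg_left hψx (pow_nonneg hC t))
    _ = M * (f (pi x) / pi x) * C ^ t := by ring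

end Congestion

theorem stmt8_general {V : Type*} [Fintype V] [Nonempty V] (P : V → V → ℝ) (pi : V → ℝ)
    (hP0 : ∀ x y, 0 ≤ P x y) (hP1 : ∀ x, ∑ y, P x y = 1)
    (hpi0 : ∀ x, 0 < pi x) (hpi1 : ∑ x, pi x = 1)
    (hstat : ∀ y, ∑ x, pi x * P x y = pi y)
    (f : ℝ → ℝ) (hf0 : ∀ a ∈ Set.Icc (0:ℝ) 1, 0 ≤ f a)
    (hf : ∀ a : ℝ, 0 < a → a ≤ 1 / 2 → 0 < f a ∧ f a ≤ f (1 - a))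
    (t : ℕ) :
    (Finset.univ.sup' Finset.univ_nonempty fun x =>
        tv (fun y => (Matrix.of P ^ t) x y) pi) ≤
      sSup {c | ∃ A : Finset V, A.Nonempty ∧ meas pi A ≤ 1 / 2 ∧
            c = meas pi A * (1 - meas pi A) / f (meas pi A)} *
        (Finset.univ.sup' Finset.univ_nonempty fun x => f (pi x) / pi x) *
        fCongMax f P pi ^ t := by
  refine Finset.sup'_le _ _ fun x _ =>
    (tv_le_congestion hP0 hP1 hpi0 hpi1 hstat hf0 hf t x).trans ?_
  have hfpos : ∀ a : ℝ, 0 < a → a ≤ 1 / 2 → 0 < f a := fun a ha ha' => (hf a ha ha').1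
  exact mul_le_mul_of_nonneg_right
    (mul_le_mul_of_nonneg_left (Finset.le_sup' (fun x => f (pi x) / pi x) (Finset.mem_univ x))
      (supSmallSets_measVar_div_nonneg hpi0 hfpos))
    (pow_nonneg (fCongMax_nonneg hpi0 hpi1 hf0 hfpos) t)

/-- Evolving set mixing bound: for a finite irreducible Markov chain and `f`
nonnegative on `[0,1]` with `0 < f(a) ≤ f(1−a)` on `(0,1/2]`,
`max_x ‖P^t(x,·) − π‖_TV ≤ M₁ · M₂ · C_f^t`. -/
theorem stmt8 {V : Type*} [Fintype V] [Nonempty V] (P : V → V → ℝ) (pi : V → ℝ)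
    (hP0 : ∀ x y, 0 ≤ P x y) (hP1 : ∀ x, ∑ y, P x y = 1)
    (hirr : ∀ x y : V, ∃ t : ℕ, 0 < (Matrix.of P ^ t) x y)
    (hpi0 : ∀ x, 0 < pi x) (hpi1 : ∑ x, pi x = 1)
    (hstat : ∀ y, ∑ x, pi x * P x y = pi y)
    (f : ℝ → ℝ) (hf0 : ∀ a ∈ Set.Icc (0:ℝ) 1, 0 ≤ f a)
    (hf : ∀ a : ℝ, 0 < a → a ≤ 1 / 2 → 0 < f a ∧ f a ≤ f (1 - a))
    (t : ℕ) :
    (Finset.univ.sup' Finset.univ_nonempty fun x =>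
        tv (fun y => (Matrix.of P ^ t) x y) pi) ≤
      sSup {c | ∃ A : Finset V, A.Nonempty ∧ meas pi A ≤ 1 / 2 ∧
            c = meas pi A * (1 - meas pi A) / f (meas pi A)} *
        (Finset.univ.sup' Finset.univ_nonempty fun x => f (pi x) / pi x) *
        fCongMax f P pi ^ t :=
  stmt8_general P pi hP0 hP1 hpi0 hpi1 hstat f hf0 hf t

end Stmt8
end
end

section
/- Let f : [0,1] → ℝ be continuous and concave on [0,1], and let g, ĝ : [0,1] → [0,1] be non-increasing functions such that ∫₀¹ g(u) du = ∫₀¹ ĝ(u) du and ∫₀^t g(u) du ≥ ∫₀^t ĝ(u) du for every t ∈ [0,1]. Then ∫₀¹ f(g(u)) du ≤ ∫₀¹ f(ĝ(u)) du. -/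
/-!
For concave `f` the slope `φ x` of `f` over a window of length `δ` at `x` is an approximate
supergradient, `f y ≤ f x + φ x * (y - x) + ε` once `δ` is small compared with the modulus of
continuity of `f`, and `φ` is antitone. Hence `f ∘ g - f ∘ ĝ ≤ ψ * (g - ĝ) + ε` with `ψ = φ ∘ ĝ`
non-decreasing, and `∫ ψ (g - ĝ) ≤ 0` by Abel summation, because `H t = ∫₀ᵗ (g - ĝ)` is
non-negative with `H 1 = 0`. Let `ε → 0`.
-/

open Set MeasureTheory intervalIntegral

namespace ConcaveOn

variable {f : ℝ → ℝ} {s : Set ℝ}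

lemma slope_le_slope_of_le (hf : ConcaveOn ℝ s f) {a b c d : ℝ} (ha : a ∈ s) (hb : b ∈ s)
    (hc : c ∈ s) (hd : d ∈ s) (hab : a < b) (hcd : c < d) (hac : a ≤ c) (hbd : b ≤ d) :
    slope f c d ≤ slope f a b :=
  calc slope f c d = slope f d c := slope_comm f c d
    _ ≤ slope f d a := hf.slope_anti hd ⟨ha, (hac.trans_lt hcd).ne⟩ ⟨hc, hcd.ne⟩ hac
    _ = slope f a d := slope_comm f d a
    _ ≤ slope f a b := hf.slope_anti ha ⟨hb, hab.ne'⟩ ⟨hd, (hab.trans_le hbd).ne'⟩ hbd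

lemma le_add_slope_mul_of_notMem_Ioo (hf : ConcaveOn ℝ s f) {x y z : ℝ} (hx : x ∈ s)
    (hy : y ∈ s) (hz : z ∈ s) (hzx : z < x) (hyzx : y ∉ Ioo z x) :
    f y ≤ f x + slope f z x * (y - x) := by
  have hfy : f y = f x + slope f x y * (y - x) := by
    have := sub_smul_slope f x y
    rw [smul_eq_mul, vsub_eq_sub] at this
    linarith
  rw [hfy, slope_comm f z x, add_le_add_iff_left]
  rcases lt_trichotomy x y with hxy | rfl | hyx
  · exact mul_le_mul_of_nonneg_right
      (hf.slope_anti hx ⟨hz, hzx.ne⟩ ⟨hy, hxy.ne'⟩ (hzx.trans hxy).le) (sub_nonneg.2 hxy.le)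
  · simp
  · have hyz : y ≤ z := not_lt.1 fun hzy => hyzx ⟨hzy, hyx⟩
    exact mul_le_mul_of_nonpos_right (hf.slope_anti hx ⟨hy, hyx.ne⟩ ⟨hz, hzx.ne⟩ hyz)
      (sub_nonpos.2 hyx.le)

end ConcaveOn

/-- Slope of `f` over the window `[x - δ, x]`, pushed right into `[a, b]` when `x < a + δ`: a
finite-difference substitute for a supergradient, which need not exist at the endpoints. -/
noncomputable def windowSlope (f : ℝ → ℝ) (a δ x : ℝ) : ℝ :=
  slope f (max x (a + δ) - δ) (max x (a + δ))

section windowSlope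

variable {f : ℝ → ℝ} {a b δ ε x y : ℝ}

lemma window_mem_Icc (hδ : 0 < δ) (hδb : a + δ ≤ b) (hx : x ∈ Icc a b) :
    max x (a + δ) - δ ∈ Icc a b ∧ max x (a + δ) ∈ Icc a b := by
  have h₁ := le_max_right x (a + δ)
  have h₂ := max_le hx.2 hδb
  exact ⟨⟨by linarith, by linarith⟩, ⟨by linarith, h₂⟩⟩

lemma ConcaveOn.windowSlope_antitoneOn (hf : ConcaveOn ℝ (Icc a b) f) (hδ : 0 < δ)
    (hδb : a + δ ≤ b) : AntitoneOn (windowSlope f a δ) (Icc a b) := by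
  intro x hx y hy hxy
  obtain ⟨hx₀, hx₁⟩ := window_mem_Icc hδ hδb hx
  obtain ⟨hy₀, hy₁⟩ := window_mem_Icc hδ hδb hy
  have hm : max x (a + δ) ≤ max y (a + δ) := max_le_max_right _ hxy
  exact hf.slope_le_slope_of_le hx₀ hx₁ hy₀ hy₁ (by linarith) (by linarith) (by linarith) hm

lemma ConcaveOn.le_add_windowSlope_mul (hf : ConcaveOn ℝ (Icc a b) f) (hδ : 0 < δ)
    (hδb : a + δ ≤ b)
    (hmod : ∀ p ∈ Icc a b, ∀ q ∈ Icc a b, |p - q| ≤ δ → |f p - f q| ≤ ε)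
    (hx : x ∈ Icc a b) (hy : y ∈ Icc a b) :
    f y ≤ f x + windowSlope f a δ x * (y - x) + 4 * ε := by
  obtain ⟨hm₀, hm₁⟩ := window_mem_Icc hδ hδb hx
  set m := max x (a + δ)
  set φ := windowSlope f a δ x
  have hφ_slope : φ = slope f (m - δ) m := rfl
  have hε : 0 ≤ ε := (abs_nonneg _).trans (hmod x hx x hx (by simp [hδ.le]))
  have hmx : m ≤ x + δ := max_le (by linarith) (by linarith [hx.1])
  have hxm : |x - m| ≤ δ := abs_sub_le_iff.2 ⟨by linarith [le_max_left x (a + δ)], by linarith⟩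
  have hφ : φ = (f m - f (m - δ)) / δ := by
    rw [hφ_slope, slope_def_field, sub_sub_cancel]
  have near : ∀ t, |t - m| ≤ δ → |φ * (t - m)| ≤ ε := fun t ht =>
    calc |φ * (t - m)| ≤ |φ| * δ := by rw [abs_mul]; gcongr
      _ = |f m - f (m - δ)| := by rw [hφ, abs_div, abs_of_pos hδ, div_mul_cancel₀ _ hδ.ne']
      _ ≤ ε := hmod _ hm₁ _ hm₀ (by rw [sub_sub_cancel, abs_of_pos hδ])
  -- outside the window `f` lies below its secant line, inside it is `ε`-close to `f m`
  have secant : f y ≤ f m + φ * (y - m) + 2 * ε := by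
    by_cases hyw : y ∈ Ioo (m - δ) m
    · have hym : |y - m| ≤ δ := by rw [abs_le]; constructor <;> linarith [hyw.1, hyw.2]
      linarith [(abs_le.1 (hmod y hy m hm₁ hym)).2, (abs_le.1 (near y hym)).1]
    · have := hf.le_add_slope_mul_of_notMem_Ioo hm₁ hy hm₀ (by linarith) hyw
      rw [← hφ_slope] at this
      linarith
  have hfm : f m ≤ f x + ε := by
    linarith [(abs_le.1 (hmod m hm₁ x hx (by rwa [abs_sub_comm]))).2]
  have hsplit : φ * (y - m) = φ * (y - x) + φ * (x - m) := by ring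
  linarith [(abs_le.1 (near x hxm)).2]

lemma ConcaveOn.exists_antitoneOn_forall_le_add_mul (hf : ConcaveOn ℝ (Icc a b) f)
    (hfc : ContinuousOn f (Icc a b)) (hab : a < b) (hε : 0 < ε) :
    ∃ φ : ℝ → ℝ, AntitoneOn φ (Icc a b) ∧
      ∀ x ∈ Icc a b, ∀ y ∈ Icc a b, f y ≤ f x + φ x * (y - x) + ε := by
  obtain ⟨δ₀, hδ₀, hmod⟩ := Metric.uniformContinuousOn_iff_le.1
    (isCompact_Icc.uniformContinuousOn_of_continuous hfc) (ε / 4) (by positivity)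
  set δ := min δ₀ (b - a)
  have hδ : 0 < δ := lt_min hδ₀ (sub_pos.2 hab)
  have hδb : a + δ ≤ b := by linarith [min_le_right δ₀ (b - a)]
  refine ⟨windowSlope f a δ, hf.windowSlope_antitoneOn hδ hδb, fun x hx y hy => ?_⟩
  have := hf.le_add_windowSlope_mul hδ hδb (ε := ε / 4) (fun p hp q hq hpq =>
    hmod p hp q hq (hpq.trans (min_le_left _ _))) hx hy
  linarith

end windowSlope

section MonotoneWeight

variable {ψ h : ℝ → ℝ} {a b C : ℝ}

lemma MonotoneOn.integrableOn_mul (hψ : MonotoneOn ψ (Icc a b)) (hh : IntegrableOn h (Icc a b)) :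
    IntegrableOn (fun u => ψ u * h u) (Icc a b) := by
  refine hh.bdd_mul (c := max |ψ a| |ψ b|)
    (aemeasurable_restrict_of_monotoneOn measurableSet_Icc hψ).aestronglyMeasurable ?_
  filter_upwards [ae_restrict_mem measurableSet_Icc] with u hu
  exact abs_le_max_abs_abs (hψ (left_mem_Icc.2 (hu.1.trans hu.2)) hu hu.1)
    (hψ hu (right_mem_Icc.2 (hu.1.trans hu.2)) hu.2)

lemma MeasureTheory.IntegrableOn.intervalIntegrable_of_mem_Icc {F : ℝ → ℝ}
    (hF : IntegrableOn F (Icc a b)) {s t : ℝ} (hs : s ∈ Icc a b) (ht : t ∈ Icc a b) :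
    IntervalIntegrable F volume s t :=
  (hF.mono_set (uIcc_subset_Icc hs ht)).intervalIntegrable

lemma integral_mul_le_of_monotoneOn_of_abs_le (hab : a ≤ b) (hψ : MonotoneOn ψ (Icc a b))
    (hh : IntegrableOn h (Icc a b)) (hC : ∀ u ∈ Icc a b, |h u| ≤ C) :
    ∫ u in a..b, ψ u * h u ≤ ψ b * (∫ u in a..b, h u) + C * (ψ b - ψ a) * (b - a) := by
  have ha : a ∈ Icc a b := left_mem_Icc.2 hab
  have hb : b ∈ Icc a b := right_mem_Icc.2 hab
  have hh' := hh.intervalIntegrable_of_mem_Icc ha hb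
  have pointwise : ∀ u ∈ Icc a b, ψ u * h u ≤ ψ b * h u + C * (ψ b - ψ a) := by
    intro u hu
    have h₁ := hψ ha hu hu.1
    have h₂ := hψ hu hb hu.2
    have h₃ := abs_le.1 (hC u hu)
    nlinarith
  calc ∫ u in a..b, ψ u * h u ≤ ∫ u in a..b, (ψ b * h u + C * (ψ b - ψ a)) :=
        integral_mono_on hab ((hψ.integrableOn_mul hh).intervalIntegrable_of_mem_Icc ha hb)
          ((hh'.const_mul _).add intervalIntegrable_const) pointwise
    _ = ψ b * (∫ u in a..b, h u) + C * (ψ b - ψ a) * (b - a) := by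
        rw [integral_add (hh'.const_mul _) intervalIntegrable_const,
          intervalIntegral.integral_const_mul, intervalIntegral.integral_const, smul_eq_mul]
        ring

-- Abel summation over the grid `a, a + w, a + 2w, …`; freezing `ψ` on a cell costs `C w` times
-- the increment of `ψ` there, so the errors telescope.
lemma integral_mul_le_of_monotoneOn_grid (hψ : MonotoneOn ψ (Icc a b))
    (hh : IntegrableOn h (Icc a b)) (hC : ∀ u ∈ Icc a b, |h u| ≤ C)
    (hH : ∀ t ∈ Icc a b, 0 ≤ ∫ u in a..t, h u) {w : ℝ} (hw : 0 ≤ w) :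
    ∀ k : ℕ, a + k * w ≤ b → ∫ u in a..a + k * w, ψ u * h u ≤
      ψ (a + k * w) * (∫ u in a..a + k * w, h u) + C * (ψ (a + k * w) - ψ a) * w := by
  intro k
  induction k with
  | zero => simp
  | succ k ih =>
    intro hk
    set t := a + k * w
    have ht' : a + ↑(k + 1) * w = t + w := by push_cast; ring
    rw [ht'] at hk ⊢
    have ht : t ∈ Icc a b := ⟨by simp only [t]; nlinarith [k.cast_nonneg (α := ℝ)], by linarith⟩
    have htw : t + w ∈ Icc a b := ⟨by linarith [ht.1], hk⟩
    have ha : a ∈ Icc a b := ⟨le_rfl, ht.1.trans ht.2⟩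
    have hsub : Icc t (t + w) ⊆ Icc a b := Icc_subset_Icc ht.1 hk
    have hψh := hψ.integrableOn_mul hh
    have cell := integral_mul_le_of_monotoneOn_of_abs_le (by linarith) (hψ.mono hsub)
      (hh.mono_set hsub) fun u hu => hC u (hsub hu)
    rw [← integral_add_adjacent_intervals (hψh.intervalIntegrable_of_mem_Icc ha ht)
        (hψh.intervalIntegrable_of_mem_Icc ht htw),
      ← integral_add_adjacent_intervals (hh.intervalIntegrable_of_mem_Icc ha ht)
        (hh.intervalIntegrable_of_mem_Icc ht htw)]
    have hmono : ψ t * (∫ u in a..t, h u) ≤ ψ (t + w) * ∫ u in a..t, h u :=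
      mul_le_mul_of_nonneg_right (hψ ht htw (by linarith)) (hH t ht)
    nlinarith [ih ht.2]

theorem integral_mul_le_mul_integral_of_monotoneOn (hab : a ≤ b) (hψ : MonotoneOn ψ (Icc a b))
    (hh : IntegrableOn h (Icc a b)) (hC : ∀ u ∈ Icc a b, |h u| ≤ C)
    (hH : ∀ t ∈ Icc a b, 0 ≤ ∫ u in a..t, h u) :
    ∫ u in a..b, ψ u * h u ≤ ψ b * ∫ u in a..b, h u := by
  have bound : ∀ n : ℕ, 0 < n → ∫ u in a..b, ψ u * h u ≤
      ψ b * (∫ u in a..b, h u) + C * (ψ b - ψ a) * (b - a) / n := by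
    intro n hn
    have hn' : (0 : ℝ) < n := Nat.cast_pos.2 hn
    have hgrid : a + n * ((b - a) / n) = b := by field_simp; ring
    have := integral_mul_le_of_monotoneOn_grid hψ hh hC hH (div_nonneg (sub_nonneg.2 hab) hn'.le)
      n hgrid.le
    rw [hgrid] at this
    rwa [mul_div_assoc]
  have hlim : Filter.Tendsto
      (fun n : ℕ => ψ b * (∫ u in a..b, h u) + C * (ψ b - ψ a) * (b - a) / n)
      Filter.atTop (nhds (ψ b * ∫ u in a..b, h u)) := by
    simpa using tendsto_const_nhds.add
      (tendsto_const_div_atTop_nhds_zero_nat (C * (ψ b - ψ a) * (b - a)))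
  exact ge_of_tendsto hlim (Filter.eventually_atTop.2 ⟨1, bound⟩)

theorem integral_mul_sub_nonpos_of_monotoneOn {g ĝ : ℝ → ℝ} (hab : a ≤ b)
    (hψ : MonotoneOn ψ (Icc a b)) (hg : IntegrableOn g (Icc a b)) (hĝ : IntegrableOn ĝ (Icc a b))
    (hC : ∀ u ∈ Icc a b, |g u - ĝ u| ≤ C) (heq : ∫ u in a..b, g u = ∫ u in a..b, ĝ u)
    (hdom : ∀ t ∈ Icc a b, ∫ u in a..t, ĝ u ≤ ∫ u in a..t, g u) :
    ∫ u in a..b, ψ u * (g u - ĝ u) ≤ 0 := by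
  have ha : a ∈ Icc a b := left_mem_Icc.2 hab
  have hH : ∀ t ∈ Icc a b,
      ∫ u in a..t, (g u - ĝ u) = (∫ u in a..t, g u) - ∫ u in a..t, ĝ u := fun t ht =>
    integral_sub (hg.intervalIntegrable_of_mem_Icc ha ht) (hĝ.intervalIntegrable_of_mem_Icc ha ht)
  have hh : IntegrableOn (fun u => g u - ĝ u) (Icc a b) := hg.sub hĝ
  have key := integral_mul_le_mul_integral_of_monotoneOn hab hψ hh hC
    fun t ht => by rw [hH t ht]; linarith [hdom t ht]
  rwa [hH b (right_mem_Icc.2 hab), heq, sub_self, mul_zero] at key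

end MonotoneWeight

lemma ContinuousOn.integrableOn_comp_Icc {f g : ℝ → ℝ} {a b c d : ℝ}
    (hf : ContinuousOn f (Icc a b)) (hg : AEMeasurable g (volume.restrict (Icc c d)))
    (hgm : MapsTo g (Icc c d) (Icc a b)) : IntegrableOn (fun u => f (g u)) (Icc c d) := by
  classical
  obtain ⟨M, hM⟩ := isCompact_Icc.exists_bound_of_continuousOn hf
  have hmeas : Measurable ((Icc a b).piecewise f 0) :=
    hf.measurable_piecewise continuousOn_const measurableSet_Icc
  refine Integrable.of_bound ((hmeas.comp_aemeasurable hg).aestronglyMeasurable.congr ?_) M ?_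
  · filter_upwards [ae_restrict_mem measurableSet_Icc] with u hu
    exact Set.piecewise_eq_of_mem _ _ _ (hgm hu)
  · filter_upwards [ae_restrict_mem measurableSet_Icc] with u hu using hM _ (hgm hu)

/-- Lemma on worst-case rearrangement: if `f` is continuous and concave on
`[0,1]`, and `g, ĝ : [0,1] → [0,1]` are non-increasing with
`∫₀¹ g = ∫₀¹ ĝ` and `∫₀^t g ≥ ∫₀^t ĝ` for all `t ∈ [0,1]`, then
`∫₀¹ f∘g ≤ ∫₀¹ f∘ĝ`. -/
theorem stmt11 (f g ghat : ℝ → ℝ)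
    (hfc : ContinuousOn f (Set.Icc (0:ℝ) 1))
    (hfconc : ConcaveOn ℝ (Set.Icc (0:ℝ) 1) f)
    (hgmem : ∀ u ∈ Set.Icc (0:ℝ) 1, g u ∈ Set.Icc (0:ℝ) 1)
    (hghatmem : ∀ u ∈ Set.Icc (0:ℝ) 1, ghat u ∈ Set.Icc (0:ℝ) 1)
    (hgmono : AntitoneOn g (Set.Icc (0:ℝ) 1))
    (hghatmono : AntitoneOn ghat (Set.Icc (0:ℝ) 1))
    (heq : (∫ u in (0:ℝ)..1, g u) = ∫ u in (0:ℝ)..1, ghat u)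
    (hdom : ∀ t ∈ Set.Icc (0:ℝ) 1, (∫ u in (0:ℝ)..t, ghat u) ≤ ∫ u in (0:ℝ)..t, g u) :
    (∫ u in (0:ℝ)..1, f (g u)) ≤ ∫ u in (0:ℝ)..1, f (ghat u) := by
  have h0 : (0:ℝ) ∈ Icc (0:ℝ) 1 := left_mem_Icc.2 zero_le_one
  have h1 : (1:ℝ) ∈ Icc (0:ℝ) 1 := right_mem_Icc.2 zero_le_one
  have hfg := (hfc.integrableOn_comp_Icc (aemeasurable_restrict_of_antitoneOn measurableSet_Icc
    hgmono) hgmem).intervalIntegrable_of_mem_Icc h0 h1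
  have hfĝ := (hfc.integrableOn_comp_Icc (aemeasurable_restrict_of_antitoneOn measurableSet_Icc
    hghatmono) hghatmem).intervalIntegrable_of_mem_Icc h0 h1
  refine le_of_forall_pos_le_add fun ε hε => ?_
  obtain ⟨φ, hφ, hφ_le⟩ := hfconc.exists_antitoneOn_forall_le_add_mul hfc zero_lt_one hε
  have hψ : MonotoneOn (fun u => φ (ghat u)) (Icc 0 1) := fun u hu v hv huv =>
    hφ (hghatmem v hv) (hghatmem u hu) (hghatmono hu hv huv)
  have hgI : IntegrableOn g (Icc 0 1) := hgmono.integrableOn_isCompact isCompact_Icc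
  have hĝI : IntegrableOn ghat (Icc 0 1) := hghatmono.integrableOn_isCompact isCompact_Icc
  have hhI : IntegrableOn (fun u => g u - ghat u) (Icc 0 1) := hgI.sub hĝI
  have hψh := integral_mul_sub_nonpos_of_monotoneOn zero_le_one hψ hgI hĝI (C := 1)
    (fun u hu => abs_sub_le_iff.2 ⟨by linarith [(hgmem u hu).2, (hghatmem u hu).1],
      by linarith [(hgmem u hu).1, (hghatmem u hu).2]⟩) heq hdom
  have hψhI := (hψ.integrableOn_mul hhI).intervalIntegrable_of_mem_Icc h0 h1
  calc ∫ u in (0:ℝ)..1, f (g u)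
      ≤ ∫ u in (0:ℝ)..1, (f (ghat u) + φ (ghat u) * (g u - ghat u) + ε) :=
        integral_mono_on zero_le_one hfg ((hfĝ.add hψhI).add intervalIntegrable_const)
          fun u hu => hφ_le _ (hghatmem u hu) _ (hgmem u hu)
    _ = (∫ u in (0:ℝ)..1, f (ghat u)) + (∫ u in (0:ℝ)..1, φ (ghat u) * (g u - ghat u)) + ε := by
        rw [integral_add (hfĝ.add hψhI) intervalIntegrable_const, integral_add hfĝ hψhI]
        simp
    _ ≤ (∫ u in (0:ℝ)..1, f (ghat u)) + ε := by linarith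
end

section
/- Let a, b, c be real numbers with 0 ≤ a ≤ 1/2, c/(1−a) ≤ b ≤ 1/2, 0 < b, and 0 ≤ c ≤ b(1−b). Then b·sin(π(a + c/b)) + (1−b)·sin(π(a − c/(1−b))) ≤ sin(πa)·cos(2πc). -/
set_option maxHeartbeats 1000000

open Real

/-- Concavity of `sin` on `[0, π]` through the origin: `k·sin θ ≤ sin (k·θ)`. -/
lemma aux_sin_concave (k θ : ℝ) (hk0 : 0 ≤ k) (hk1 : k ≤ 1) (h0 : 0 ≤ θ)
    (hπ : θ ≤ Real.pi) : k * Real.sin θ ≤ Real.sin (k * θ) := by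
  have h := strictConcaveOn_sin_Icc.concaveOn.2
    (Set.mem_Icc.2 ⟨le_refl (0:ℝ), Real.pi_pos.le⟩)
    (Set.mem_Icc.2 ⟨h0, hπ⟩)
    (by linarith : (0:ℝ) ≤ 1 - k) hk0 (by ring)
  simpa [Real.sin_zero, smul_eq_mul] using h

/-- Key inequality (Lemma `lem:ineq`): if `0 ≤ a ≤ 1/2`, `c/(1−a) ≤ b ≤ 1/2`,
`b > 0` and `0 ≤ c ≤ b(1−b)`, then
`b·sin(π(a + c/b)) + (1−b)·sin(π(a − c/(1−b))) ≤ sin(πa)·cos(2πc)`. -/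
theorem stmt17 (a b c : ℝ) (ha0 : 0 ≤ a) (ha : a ≤ 1 / 2)
    (hcb : c / (1 - a) ≤ b) (hb : b ≤ 1 / 2) (hb0 : 0 < b)
    (hc0 : 0 ≤ c) (hc : c ≤ b * (1 - b)) :
    b * Real.sin (Real.pi * (a + c / b)) +
        (1 - b) * Real.sin (Real.pi * (a - c / (1 - b))) ≤
      Real.sin (Real.pi * a) * Real.cos (2 * Real.pi * c) := by
  have hπ : (0:ℝ) < Real.pi := Real.pi_pos
  have h1b : (0:ℝ) < 1 - b := by linarith
  have hB : (0:ℝ) < b * (1 - b) := mul_pos hb0 h1b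
  set u : ℝ := Real.pi * c / b with hu_def
  set v : ℝ := Real.pi * c / (1 - b) with hv_def
  have hu0 : 0 ≤ u := by positivity
  have hv0 : 0 ≤ v := by positivity
  have huπ : u ≤ Real.pi := by
    rw [hu_def, div_le_iff₀ hb0]
    nlinarith [mul_le_mul_of_nonneg_left hc hπ.le, mul_pos hπ (mul_pos hb0 hb0)]
  -- rewrite the sines of sums
  have e1 : Real.pi * (a + c / b) = Real.pi * a + u := by
    rw [hu_def]; field_simp
  have e2 : Real.pi * (a - c / (1 - b)) = Real.pi * a - v := by
    rw [hv_def]; field_simp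
  rw [e1, e2, Real.sin_add, Real.sin_sub]
  set S : ℝ := Real.sin (Real.pi * a)
  set C : ℝ := Real.cos (Real.pi * a)
  have hS : 0 ≤ S := by
    apply Real.sin_nonneg_of_nonneg_of_le_pi (by positivity)
    nlinarith
  have hC : 0 ≤ C := by
    apply Real.cos_nonneg_of_mem_Icc
    constructor <;> nlinarith
  -- Step (i): b * sin u ≤ (1 - b) * sin v
  have hstep1 : b * Real.sin u ≤ (1 - b) * Real.sin v := by
    have hvu : v = (b / (1 - b)) * u := by
      rw [hu_def, hv_def]; field_simp
    have := aux_sin_concave (b / (1 - b)) u (by positivity)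
      (by rw [div_le_one h1b]; linarith) hu0 huπ
    rw [hvu]
    calc b * Real.sin u = (1 - b) * ((b / (1 - b)) * Real.sin u) := by
          field_simp
      _ ≤ (1 - b) * Real.sin (b / (1 - b) * u) :=
          mul_le_mul_of_nonneg_left this h1b.le
  -- Step (ii): b * cos u + (1 - b) * cos v ≤ cos (2 π c)
  have hstep2 : b * Real.cos u + (1 - b) * Real.cos v ≤ Real.cos (2 * Real.pi * c) := by
    set s : ℝ := Real.pi * c / (2 * (b * (1 - b))) with hs_def
    set k : ℝ := 1 - 2 * b with hk_def
    have hs0 : 0 ≤ s := by positivity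
    have hs2 : s ≤ Real.pi / 2 := by
      rw [hs_def, div_le_div_iff₀ (by positivity) (by norm_num : (0:ℝ) < 2)]
      nlinarith [mul_le_mul_of_nonneg_left hc hπ.le]
    have hk0 : 0 ≤ k := by rw [hk_def]; linarith
    have hk1 : k ≤ 1 := by rw [hk_def]; linarith
    have hks0 : 0 ≤ k * s := mul_nonneg hk0 hs0
    have hksπ : k * s ≤ Real.pi := by
      have := mul_le_mul_of_nonneg_right hk1 hs0
      linarith
    have hkks : k * (k * s) ≤ k * s := by
      have := mul_le_mul_of_nonneg_right hk1 hks0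
      linarith
    have eu : u = s + k * s := by
      rw [hu_def, hs_def, hk_def]; field_simp; ring
    have ev : v = s - k * s := by
      rw [hv_def, hs_def, hk_def]; field_simp; ring
    have ec : 2 * Real.pi * c = s - k * (k * s) := by
      rw [hs_def, hk_def]; field_simp; ring
    rw [eu, ev, ec, Real.cos_add, Real.cos_sub, Real.cos_sub]
    have hcs : 0 ≤ Real.cos s := Real.cos_nonneg_of_mem_Icc ⟨by linarith, hs2⟩
    have hss : 0 ≤ Real.sin s :=
      Real.sin_nonneg_of_nonneg_of_le_pi hs0 (by linarith)
    have hcos : Real.cos (k * s) ≤ Real.cos (k * (k * s)) :=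
      Real.cos_le_cos_of_nonneg_of_le_pi (mul_nonneg hk0 hks0) hksπ hkks
    have hsin : k * Real.sin (k * s) ≤ Real.sin (k * (k * s)) :=
      aux_sin_concave k (k * s) hk0 hk1 hks0 hksπ
    have hA := mul_le_mul_of_nonneg_left hcos hcs
    have hB2 := mul_le_mul_of_nonneg_left hsin hss
    have heq : k * (Real.sin s * Real.sin (k * s)) =
        (1 - 2 * b) * (Real.sin s * Real.sin (k * s)) := by rw [hk_def]
    linarith [hA, hB2, heq]
  -- combine
  have h2 : S * (b * Real.cos u + (1 - b) * Real.cos v) ≤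
      S * Real.cos (2 * Real.pi * c) := mul_le_mul_of_nonneg_left hstep2 hS
  have h1 : C * (b * Real.sin u) ≤ C * ((1 - b) * Real.sin v) :=
    mul_le_mul_of_nonneg_left hstep1 hC
  linarith [h1, h2]
end
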